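/- Set R=N/4. The Fourier coefficients β(λ) of f ↦ ˜Λ_R(f+1)˜H_R(f) are real and non-negative for every λ ∈ F₂(x)/F₂[x], and β(0) ≫ 1 (bounded below by an absolute positive constant, uniformly in N). -/

import Mathlib

/-!
For a prime `r` with `q = 2^{deg r}`, the local factor `Λ_r(f+1) τ²_r(f)` depends only on `f`
mod `r`; expanding the indicators `1_{r ∣ f}`, `1_{r ∣ f+1}` by orthogonality of the characters
`e(tf/r)` gives it a Fourier expansion with non-negative coefficients and constant coefficient
`q(q+2)/((q-1)(q+3)) ≥ 1`. The product over the primes of `G_R` has as coefficients the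
convolution of these families, so they stay non-negative and the constant one stays `≥ 1`.
Fourier coefficients supported on `F₂(x)/F₂[x]` are unique (test against `e(λf)` over a large
`G_M`), so `β` is this convolution, and `c = 1` works for every `N`.
-/

open Polynomial
open scoped Classical

noncomputable section

abbrev F2 := ZMod 2
abbrev Kinf := LaurentSeries F2
def polyToK (f : F2[X]) : Kinf :=
  ∑ i ∈ f.support, HahnSeries.single (-(i : ℤ)) (f.coeff i)
def ordK (a : Kinf) : WithBot ℤ := if a = 0 then ⊥ else (↑(-a.order) : WithBot ℤ)
def eKr (a : Kinf) : ℝ := (-1 : ℝ) ^ ((a.coeff 1).val)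
def eK (a : Kinf) : ℂ := ((eKr a : ℝ) : ℂ)
def InT (θ : Kinf) : Prop := ordK θ ≤ ((-1 : ℤ) : WithBot ℤ)
def GN (N : ℕ) : Finset F2[X] :=
  Set.Finite.toFinset (s := {f : F2[X] | f.degree < (N : ℕ)}) (by
    have h : {f : F2[X] | f.degree < (N : ℕ)} = ↑(Polynomial.degreeLT F2 N) := by
      ext f
      simp [Polynomial.mem_degreeLT]
    rw [h]
    have : Finite (Polynomial.degreeLT F2 N) :=
      Finite.of_equiv _ (Polynomial.degreeLTEquiv F2 N).symm.toEquiv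
    exact (Polynomial.degreeLT F2 N : Set F2[X]).toFinite)
def ratK (u s : F2[X]) : Kinf := polyToK u * (polyToK s)⁻¹

/-- τ(f): the number of divisors of `f`. -/
def tau (f : F2[X]) : ℕ := ((GN (f.natDegree + 1)).filter (fun g => g ∣ f)).card

/-- φ(f): the number of invertible residues modulo `f`. -/
def phi (f : F2[X]) : ℕ := ((GN f.natDegree).filter (fun g => IsCoprime g f)).card

/-- ω(f): the number of (irreducible nonconstant, i.e. prime) divisors of `f`. -/
def omegaP (f : F2[X]) : ℕ :=
  ((GN (f.natDegree + 1)).filter (fun r => Irreducible r ∧ r ∣ f)).card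

/-- The Möbius function on `F₂[x]`. -/
def mu (f : F2[X]) : ℤ := if Squarefree f then (-1) ^ (omegaP f) else 0

/-- The set of invertible residues modulo `s` (canonical representatives of
`(F₂[x]/(s))^×`, i.e. polynomials of degree `< deg s` coprime to `s`). -/
def residues (s : F2[X]) : Finset F2[X] := (GN s.natDegree).filter (fun t => IsCoprime t s)

/-- `α(s) = μ(s)/φ(s)`. -/
def alphaA (s : F2[X]) : ℝ := (mu s : ℝ) / (phi s : ℝ)

/-- `α'(s) = ∏_{r | s prime} 3/(2^{deg r}+3)` for `s` squarefree, `0` otherwise. -/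
def alphaB (s : F2[X]) : ℝ :=
  if Squarefree s then
    ∏ r ∈ (GN (s.natDegree + 1)).filter (fun r => Irreducible r ∧ r ∣ s),
      (3 : ℝ) / ((2 : ℝ) ^ r.natDegree + 3)
  else 0

/-- `Λ_M(f) = Σ_{s ∈ G_M} α(s) Σ_{t ∈ (F₂[x]/(s))^×} e(f t s⁻¹)`. -/
def LambdaM (M : ℕ) (f : F2[X]) : ℝ :=
  ∑ s ∈ GN M, alphaA s * ∑ t ∈ residues s, eKr (polyToK f * ratK t s)

/-- `H_M(f) = Σ_{s ∈ G_M} α'(s) Σ_{t ∈ (F₂[x]/(s))^×} e(f t s⁻¹)`. -/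
def HM (M : ℕ) (f : F2[X]) : ℝ :=
  ∑ s ∈ GN M, alphaB s * ∑ t ∈ residues s, eKr (polyToK f * ratK t s)

/-- `Λ'(f) = deg f` if `f` is prime, `0` otherwise. -/
def LambdaP (f : F2[X]) : ℝ := if Irreducible f then (f.natDegree : ℝ) else 0

/-- `Ψ(f) = Λ'(f+1) H_Q(f) 1_{f ∈ G_N}`. -/
def Psi (N Q : ℕ) (f : F2[X]) : ℝ :=
  LambdaP (f + 1) * HM Q f * (if f ∈ GN N then 1 else 0)

/-- `Ψ'(f) = Λ_R(f+1) H_Q(f) 1_{f ∈ G_N}`. -/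
def Psi' (N R Q : ℕ) (f : F2[X]) : ℝ :=
  LambdaM R (f + 1) * HM Q f * (if f ∈ GN N then 1 else 0)

/-- `Λ_r(f)` for a single prime `r`. -/
def Lambda_r (r f : F2[X]) : ℝ :=
  if r ∣ f then 0 else (2 : ℝ) ^ r.natDegree / ((2 : ℝ) ^ r.natDegree - 1)

/-- `τ²_r(f)` for a single prime `r`. -/
def tauSq_r (r f : F2[X]) : ℝ :=
  if r ∣ f then 4 * (2 : ℝ) ^ r.natDegree / ((2 : ℝ) ^ r.natDegree + 3)
  else (2 : ℝ) ^ r.natDegree / ((2 : ℝ) ^ r.natDegree + 3)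

/-- `˜Λ_M(f) = ∏_{r ∈ G_M prime} Λ_r(f)`. -/
def LambdaTilde (M : ℕ) (f : F2[X]) : ℝ :=
  ∏ r ∈ (GN M).filter (fun r => Irreducible r), Lambda_r r f

/-- `˜H_M(f) = ∏_{r ∈ G_M prime} τ²_r(f)`. -/
def HTilde (M : ℕ) (f : F2[X]) : ℝ :=
  ∏ r ∈ (GN M).filter (fun r => Irreducible r), tauSq_r r f

/-- The element of `K∞` determined by a rational function (with `x ↦ t⁻¹`). -/
def ratToK (l : RatFunc F2) : Kinf := polyToK l.num * (polyToK l.denom)⁻¹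

/-- `c : F₂(x)/F₂[x] → ℝ` (encoded on the canonical representatives
`λ = num/denom` in lowest terms with `deg num < deg denom`) is the system of Fourier
coefficients of `F : F₂[x] → ℝ`, i.e. `F(f) = Σ_λ c(λ) e(λ f)`. -/
def IsFourierCoeffs (F : F2[X] → ℝ) (c : RatFunc F2 → ℝ) : Prop :=
  (Function.support c).Finite ∧
  (∀ l : RatFunc F2, c l ≠ 0 → (l.num).degree < (l.denom).degree) ∧
  ∀ f : F2[X], F f = ∑ᶠ l : RatFunc F2, c l * eKr (ratToK l * polyToK f)

/-- The canonical representative (mod `F₂[x]`) of a rational function. -/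
def fracRat (l : RatFunc F2) : RatFunc F2 :=
  l - algebraMap F2[X] (RatFunc F2) (l.num / l.denom)

/-- `c(n, η)` from the statement of the exponential sum estimate for `Λ'`. -/
def cFun (n : ℕ) (η : Kinf) : ℝ :=
  if ordK η < ((-(n : ℤ) - 1 : ℤ) : WithBot ℤ) then 1
  else if ordK η = ((-(n : ℤ) - 1 : ℤ) : WithBot ℤ) then -1
  else 0

/-- The class `C_B(X)` (with explicit implied constant `Cst`): functions whose Fourier
coefficients are supported on `λ` with squarefree denominator of degree `≤ X` and satisfy
`|c(λ)| ≤ Cst · τ(denom λ)^B / 2^{deg (denom λ)}`. -/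
def InClassC (B X : ℕ) (Cst : ℝ) (F : F2[X] → ℝ) : Prop :=
  ∃ c : RatFunc F2 → ℝ, IsFourierCoeffs F c ∧
    (∀ l : RatFunc F2, c l ≠ 0 → Squarefree l.denom ∧ (l.denom).natDegree ≤ X) ∧
    (∀ l : RatFunc F2, |c l| ≤ Cst * (tau l.denom : ℝ) ^ B / 2 ^ (l.denom).natDegree)

/-- The fractional part `‖θ‖` of `θ ∈ K∞`: keep exactly the coefficients of `x^{-n}`, `n ≥ 1`. -/
def fracK (θ : Kinf) : Kinf :=
  ⟨fun n => if 1 ≤ n then θ.coeff n else 0, by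
    apply θ.isPWO_support'.mono
    intro n hn
    simp only [Function.mem_support, ne_eq] at hn ⊢
    intro h
    apply hn
    split_ifs
    · exact h
    · rfl⟩

lemma polyToK_eq_eval₂ (f : F2[X]) :
    polyToK f = f.eval₂ HahnSeries.C (HahnSeries.single (-1) 1) := by
  simp only [polyToK, Polynomial.eval₂_eq_sum, Polynomial.sum_def, HahnSeries.single_pow,
    HahnSeries.C_apply, HahnSeries.single_mul_single]
  simp

def polyToKHom : F2[X] →+* Kinf := Polynomial.eval₂RingHom HahnSeries.C (HahnSeries.single (-1) 1)

@[simp]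
lemma polyToKHom_apply (f : F2[X]) : polyToKHom f = polyToK f :=
  (polyToK_eq_eval₂ f).symm

lemma coeff_polyToK_neg (f : F2[X]) (n : ℕ) : (polyToK f).coeff (-n) = f.coeff n := by
  simp [polyToK, HahnSeries.coeff_sum, HahnSeries.coeff_single, eq_comm]

lemma coeff_polyToK_of_pos (f : F2[X]) {k : ℤ} (hk : 0 < k) : (polyToK f).coeff k = 0 := by
  simp only [polyToK, HahnSeries.coeff_sum, HahnSeries.coeff_single]
  exact Finset.sum_eq_zero fun i _ => if_neg (by omega)

lemma polyToK_ne_zero {f : F2[X]} (hf : f ≠ 0) : polyToK f ≠ 0 := fun h => by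
  have := coeff_polyToK_neg f f.natDegree
  rw [h, HahnSeries.coeff_zero, eq_comm, coeff_natDegree, leadingCoeff_eq_zero] at this
  exact hf this

lemma order_polyToK {f : F2[X]} (hf : f ≠ 0) : (polyToK f).order = -f.natDegree := by
  have hlead : (polyToK f).coeff (-f.natDegree) ≠ 0 := by
    simpa [coeff_polyToK_neg] using hf
  refine le_antisymm (HahnSeries.order_le_of_coeff_ne_zero hlead) (not_lt.1 fun hlt => ?_)
  have hord := mt HahnSeries.coeff_order_eq_zero.1 (polyToK_ne_zero hf)
  obtain ⟨n, hn⟩ : ∃ n : ℕ, (polyToK f).order = -n := ⟨(-(polyToK f).order).toNat, by omega⟩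
  rw [hn, coeff_polyToK_neg] at hord
  exact hord (Polynomial.coeff_eq_zero_of_natDegree_lt (by omega))

def ratToKHom : RatFunc F2 →+* Kinf :=
  RatFunc.liftRingHom polyToKHom fun f hf => by
    rw [Submonoid.mem_comap, mem_nonZeroDivisors_iff_ne_zero, polyToKHom_apply]
    exact polyToK_ne_zero (nonZeroDivisors.ne_zero hf)

@[simp]
lemma ratToKHom_apply (l : RatFunc F2) : ratToKHom l = ratToK l := by
  conv_lhs => rw [← RatFunc.num_div_denom l]
  rw [ratToKHom, RatFunc.liftRingHom_apply_div, polyToKHom_apply, polyToKHom_apply, ratToK,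
    div_eq_mul_inv]

lemma polyToK_one : polyToK 1 = 1 := by
  rw [← polyToKHom_apply, map_one]

lemma ratToK_algebraMap (f : F2[X]) : ratToK (algebraMap F2[X] (RatFunc F2) f) = polyToK f := by
  rw [ratToK, RatFunc.num_algebraMap, RatFunc.denom_algebraMap, polyToK_one, inv_one, mul_one]

lemma order_ratToK {l : RatFunc F2} (hl : l ≠ 0) : (ratToK l).order = -l.intDegree := by
  have hnum := polyToK_ne_zero (RatFunc.num_ne_zero hl)
  have hden := polyToK_ne_zero l.denom_ne_zero
  have h : ratToK l * polyToK l.denom = polyToK l.num := by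
    rw [ratToK, mul_assoc, inv_mul_cancel₀ hden, mul_one]
  have := congrArg HahnSeries.order h
  rw [HahnSeries.order_mul (left_ne_zero_of_mul (h ▸ hnum)) hden, order_polyToK l.denom_ne_zero,
    order_polyToK (RatFunc.num_ne_zero hl)] at this
  rw [RatFunc.intDegree]
  omega

lemma eKr_add (a b : Kinf) : eKr (a + b) = eKr a * eKr b := by
  simp only [eKr, HahnSeries.coeff_add, ZMod.val_add, ← pow_add]
  exact (neg_one_pow_eq_pow_mod_two _).symm

lemma eKr_le_one (a : Kinf) : eKr a ≤ 1 := by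
  rcases neg_one_pow_eq_or ℝ (a.coeff 1).val with h | h <;> simp [eKr, h]

lemma eKr_of_coeff_one_eq_zero {a : Kinf} (h : a.coeff 1 = 0) : eKr a = 1 := by
  simp [eKr, h]

lemma eKr_eq_neg_one_of_order_eq_one {a : Kinf} (ha : a ≠ 0) (h : a.order = 1) : eKr a = -1 := by
  have hcoeff : a.coeff 1 ≠ 0 := h ▸ mt HahnSeries.coeff_order_eq_zero.1 ha
  have : a.coeff 1 = 1 := (by decide : ∀ x : F2, x ≠ 0 → x = 1) _ hcoeff
  simp [eKr, this, ZMod.val_one]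

def ratChar (l : RatFunc F2) : ℝ := eKr (ratToK l)

lemma eKr_ratToK_mul_polyToK (l : RatFunc F2) (f : F2[X]) :
    eKr (ratToK l * polyToK f) = ratChar (l * f) := by
  rw [ratChar, ← ratToK_algebraMap, RatFunc.coePolynomial_eq_algebraMap]
  simp only [← ratToKHom_apply, map_mul]

lemma ratChar_add (l l' : RatFunc F2) : ratChar (l + l') = ratChar l * ratChar l' := by
  simp only [ratChar, ← ratToKHom_apply, map_add, eKr_add]

lemma ratChar_coe (f : F2[X]) : ratChar f = 1 := by
  rw [ratChar, RatFunc.coePolynomial_eq_algebraMap, ratToK_algebraMap]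
  exact eKr_of_coeff_one_eq_zero (coeff_polyToK_of_pos f one_pos)

lemma ratChar_zero : ratChar 0 = 1 := by
  simpa [RatFunc.coePolynomial_eq_algebraMap] using ratChar_coe 0

lemma ratChar_le_one (l : RatFunc F2) : ratChar l ≤ 1 := eKr_le_one _

lemma ratChar_eq_neg_one {l : RatFunc F2} (hl : l ≠ 0) (h : l.intDegree = -1) :
    ratChar l = -1 :=
  eKr_eq_neg_one_of_order_eq_one (by simpa [← ratToKHom_apply] using hl)
    (by rw [order_ratToK hl, h, neg_neg])

lemma mem_GN {M : ℕ} {f : F2[X]} : f ∈ GN M ↔ f ∈ degreeLT F2 M := by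
  simp [GN, mem_degreeLT]

lemma card_GN (M : ℕ) : (GN M).card = 2 ^ M := by
  rw [← Nat.card_eq_finsetCard, Nat.card_congr
    ((Equiv.subtypeEquivRight fun _ => mem_GN).trans (degreeLTEquiv F2 M).toEquiv)]
  simp

lemma sum_GN_add_right {M : ℕ} {g : F2[X]} (hg : g ∈ GN M) (F : F2[X] → ℝ) :
    ∑ f ∈ GN M, F (f + g) = ∑ f ∈ GN M, F f :=
  Finset.sum_equiv (Equiv.addRight g)
    (fun f => by simp [mem_GN, Submodule.add_mem_iff_left _ (mem_GN.1 hg)]) (fun _ _ => rfl)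

lemma sum_GN_ratChar_mul_eq_zero {l : RatFunc F2} {M : ℕ} (hl : l ≠ 0) (hneg : l.intDegree < 0)
    (hM : -l.intDegree ≤ M) : ∑ f ∈ GN M, ratChar (l * f) = 0 := by
  obtain ⟨k, hk⟩ : ∃ k : ℕ, l.intDegree = -(k + 1) := ⟨(-l.intDegree - 1).toNat, by omega⟩
  have hg : X ^ k ∈ GN M := by
    rw [mem_GN, mem_degreeLT, degree_X_pow]
    exact_mod_cast (by omega : k < M)
  -- the character is `-1` at `g = xᵏ`, so shifting by `g` negates the sum
  have hchar : ratChar (l * ↑(X ^ k : F2[X])) = -1 := by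
    have hXk : ((X ^ k : F2[X]) : RatFunc F2) ≠ 0 :=
      RatFunc.algebraMap_ne_zero (pow_ne_zero k X_ne_zero)
    refine ratChar_eq_neg_one (mul_ne_zero hl hXk) ?_
    rw [RatFunc.intDegree_mul hl hXk, RatFunc.coePolynomial_eq_algebraMap,
      RatFunc.intDegree_polynomial, natDegree_X_pow, hk]
    ring
  have := sum_GN_add_right hg fun f => ratChar (l * f)
  simp only [RatFunc.coePolynomial_eq_algebraMap, map_add, mul_add, ratChar_add] at this hchar ⊢
  rw [hchar, ← Finset.sum_mul] at this
  linarith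

lemma sum_GN_ratChar_div_mul {r : F2[X]} (hr : r ≠ 0) (f : F2[X]) :
    ∑ t ∈ GN r.natDegree, ratChar ((t : RatFunc F2) / r * f)
      = if r ∣ f then 2 ^ r.natDegree else 0 := by
  have hr' : (r : RatFunc F2) ≠ 0 := RatFunc.algebraMap_ne_zero hr
  split_ifs with hdvd
  · obtain ⟨c, rfl⟩ := hdvd
    have : ∀ t : F2[X], (t : RatFunc F2) / r * ↑(r * c) = ↑(t * c) := fun t => by
      simp only [RatFunc.coePolynomial_eq_algebraMap, map_mul] at hr' ⊢
      field_simp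
    simp only [this, ratChar_coe, Finset.sum_const, card_GN, nsmul_one, Nat.cast_pow,
      Nat.cast_ofNat]
  · have hb : ((f % r : F2[X]) : RatFunc F2) ≠ 0 :=
      RatFunc.algebraMap_ne_zero fun h => hdvd (EuclideanDomain.mod_eq_zero.1 h)
    -- `t f / r ≡ (f mod r) t / r` modulo `F₂[x]`
    have hshift : ∀ t : F2[X],
        ratChar ((t : RatFunc F2) / r * f) = ratChar (((f % r : F2[X]) : RatFunc F2) / r * t) :=
      fun t => by
        have : (t : RatFunc F2) / r * f
            = ↑(t * (f / r)) + ((f % r : F2[X]) : RatFunc F2) / r * t := by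
          conv_lhs => rw [← EuclideanDomain.div_add_mod f r]
          simp only [RatFunc.coePolynomial_eq_algebraMap, map_mul, map_add] at hr' ⊢
          field_simp
        rw [this, ratChar_add, ratChar_coe, one_mul]
    have hdeg : (f % r).natDegree < r.natDegree :=
      natDegree_lt_natDegree (by simpa using hb) (EuclideanDomain.mod_lt f hr)
    simp only [hshift]
    refine sum_GN_ratChar_mul_eq_zero (div_ne_zero hb hr') ?_ ?_ <;>
      rw [RatFunc.intDegree_div hb hr'] <;>
      simp only [RatFunc.coePolynomial_eq_algebraMap, RatFunc.intDegree_polynomial] <;> omega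

namespace RatFunc

variable {K : Type*} [Field K]

lemma degree_num_lt_degree_denom_iff {l : RatFunc K} :
    l.num.degree < l.denom.degree ↔ l = 0 ∨ l.intDegree < 0 := by
  rcases eq_or_ne l 0 with rfl | hl
  · simp
  rw [← natDegree_lt_natDegree_iff (num_ne_zero hl), intDegree]
  simp [hl]

variable (K) in
/-- The canonical representatives of `K(x)/K[x]`. -/
def strictlyProper : AddSubgroup (RatFunc K) where
  carrier := {l | l.num.degree < l.denom.degree}
  zero_mem' := by simp
  add_mem' {a b} := by
    simp only [Set.mem_ofPred_eq, degree_num_lt_degree_denom_iff]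
    rintro (rfl | ha) (rfl | hb)
    · simp
    · simp [hb]
    · simp [ha]
    by_cases hab : a + b = 0
    · exact .inl hab
    have hb0 : b ≠ 0 := by rintro rfl; simp at hb
    exact .inr ((intDegree_add_le hb0 hab).trans_lt (max_lt ha hb))
  neg_mem' := by simp [degree_num_lt_degree_denom_iff]

lemma mem_strictlyProper {l : RatFunc K} :
    l ∈ strictlyProper K ↔ l.num.degree < l.denom.degree := Iff.rfl

lemma div_mem_strictlyProper {t r : K[X]} (h : t.degree < r.degree) :
    (t : RatFunc K) / r ∈ strictlyProper K := by
  rw [mem_strictlyProper, degree_num_lt_degree_denom_iff]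
  rcases eq_or_ne t 0 with rfl | ht
  · simp [coePolynomial_eq_algebraMap]
  have hr : r ≠ 0 := ne_zero_of_degree_gt h
  right
  rw [coePolynomial_eq_algebraMap, coePolynomial_eq_algebraMap,
    intDegree_div (algebraMap_ne_zero ht) (algebraMap_ne_zero hr), intDegree_polynomial,
    intDegree_polynomial, sub_neg, Nat.cast_lt]
  exact natDegree_lt_natDegree ht h

end RatFunc

lemma sum_GN_ratChar_mul {l : RatFunc F2} (hl : l ∈ RatFunc.strictlyProper F2) {M : ℕ}
    (hM : -l.intDegree ≤ M) :
    ∑ f ∈ GN M, ratChar (l * f) = if l = 0 then 2 ^ M else 0 := by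
  split_ifs with h0
  · simp [h0, ratChar_zero, card_GN]
  · exact sum_GN_ratChar_mul_eq_zero h0
      ((RatFunc.degree_num_lt_degree_denom_iff.1 hl).resolve_left h0) hM

lemma IsFourierCoeffs.eq_sum {F : F2[X] → ℝ} {c : RatFunc F2 → ℝ} (hc : IsFourierCoeffs F c)
    {S : Finset (RatFunc F2)} (hS : Function.support c ⊆ S) (f : F2[X]) :
    F f = ∑ l ∈ S, c l * ratChar (l * f) := by
  rw [hc.2.2 f]
  simp only [eKr_ratToK_mul_polyToK]
  exact finsum_eq_sum_of_support_subset _ fun l hl => hS (left_ne_zero_of_mul hl)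

lemma IsFourierCoeffs.eventually_sum_GN_mul_ratChar {F : F2[X] → ℝ} {c : RatFunc F2 → ℝ}
    (hc : IsFourierCoeffs F c) {l₀ : RatFunc F2} (hl₀ : l₀ ∈ RatFunc.strictlyProper F2) :
    ∀ᶠ M in Filter.atTop, ∑ f ∈ GN M, F f * ratChar (l₀ * f) = 2 ^ M * c l₀ := by
  have hfin : (Function.support c).Finite := hc.1
  set S := hfin.toFinset
  refine Filter.eventually_atTop.2 ⟨S.sup fun l => (-(l + l₀).intDegree).toNat, fun M hM => ?_⟩
  have hS : ∀ l ∈ S, l + l₀ ∈ RatFunc.strictlyProper F2 := fun l hl =>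
    add_mem (hc.2.1 l (by simpa [S] using hl)) hl₀
  calc ∑ f ∈ GN M, F f * ratChar (l₀ * f)
      = ∑ l ∈ S, c l * ∑ f ∈ GN M, ratChar ((l + l₀) * f) := by
        simp only [hc.eq_sum hfin.coe_toFinset.superset, Finset.sum_mul, Finset.mul_sum, add_mul,
          ratChar_add, mul_assoc]
        exact Finset.sum_comm
    _ = ∑ l ∈ S, if l = l₀ then 2 ^ M * c l else 0 := by
        refine Finset.sum_congr rfl fun l hl => ?_
        rw [sum_GN_ratChar_mul (hS l hl) ?_, CharTwo.add_eq_zero]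
        · split_ifs <;> ring
        · have := Finset.le_sup (f := fun l => (-(l + l₀).intDegree).toNat) hl
          omega
    _ = 2 ^ M * c l₀ := by
        rw [Finset.sum_ite_eq']
        split_ifs with h
        · rfl
        · rw [hfin.mem_toFinset, Function.mem_support, not_not] at h
          rw [h, mul_zero]

lemma IsFourierCoeffs.unique {F : F2[X] → ℝ} {c c' : RatFunc F2 → ℝ}
    (hc : IsFourierCoeffs F c) (hc' : IsFourierCoeffs F c') : c = c' := by
  funext l₀
  by_cases hl₀ : l₀ ∈ RatFunc.strictlyProper F2
  · obtain ⟨M, hM, hM'⟩ := ((hc.eventually_sum_GN_mul_ratChar hl₀).and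
      (hc'.eventually_sum_GN_mul_ratChar hl₀)).exists
    exact mul_left_cancel₀ (pow_ne_zero M two_ne_zero) (hM.symm.trans hM')
  · rw [not_imp_comm.1 (hc.2.1 l₀) hl₀, not_imp_comm.1 (hc'.2.1 l₀) hl₀]

namespace AddMonoidAlgebra

variable {R M : Type*} [Semiring R] [PartialOrder R] [IsOrderedRing R] [AddMonoid M]

lemma coeff_mul_nonneg {x y : AddMonoidAlgebra R M} (hx : ∀ m, 0 ≤ x.coeff m)
    (hy : ∀ m, 0 ≤ y.coeff m) (m : M) : 0 ≤ (x * y).coeff m := by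
  classical
  rw [coeff_mul]
  exact Finset.sum_nonneg fun a _ => Finset.sum_nonneg fun b _ =>
    ite_nonneg (mul_nonneg (hx a) (hy b)) le_rfl

lemma coeff_zero_mul_coeff_zero_le {x y : AddMonoidAlgebra R M} (hx : ∀ m, 0 ≤ x.coeff m)
    (hy : ∀ m, 0 ≤ y.coeff m) : x.coeff 0 * y.coeff 0 ≤ (x * y).coeff 0 := by
  classical
  have hsplit : x = single 0 (x.coeff 0) + ofCoeff (x.coeff.erase 0) := by
    rw [← ofCoeff_single, ← ofCoeff_add, Finsupp.single_add_erase, ofCoeff_coeff]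
  have herase : ∀ m, 0 ≤ (ofCoeff (x.coeff.erase 0) : AddMonoidAlgebra R M).coeff m := fun m => by
    rw [coeff_ofCoeff, Finsupp.erase_apply]
    exact ite_nonneg le_rfl (hx m)
  conv_rhs => rw [hsplit, add_mul, coeff_add, Finsupp.add_apply, coeff_single_zero_mul]
  exact le_add_of_nonneg_right (coeff_mul_nonneg herase hy 0)

end AddMonoidAlgebra

def fourierChar : Multiplicative (RatFunc F2) →* (F2[X] → ℝ) where
  toFun l f := ratChar (l.toAdd * f)
  map_one' := funext fun f => by simp [ratChar_zero]
  map_mul' a b := funext fun f => by simp [add_mul, ratChar_add]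

/-- Coefficient families are elements of the group algebra `ℝ[F₂(x)]`, so that multiplying
functions corresponds to convolving their coefficients. -/
def fourierTransform : AddMonoidAlgebra ℝ (RatFunc F2) →ₐ[ℝ] (F2[X] → ℝ) :=
  AddMonoidAlgebra.lift ℝ (F2[X] → ℝ) (RatFunc F2) fourierChar

lemma fourierTransform_apply (c : AddMonoidAlgebra ℝ (RatFunc F2)) (f : F2[X]) :
    fourierTransform c f = ∑ l ∈ c.coeff.support, c.coeff l * ratChar (l * f) := by
  simp [fourierTransform, AddMonoidAlgebra.lift_apply, Finsupp.sum, fourierChar]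

lemma fourierTransform_single (l : RatFunc F2) (a : ℝ) (f : F2[X]) :
    fourierTransform (AddMonoidAlgebra.single l a) f = a * ratChar (l * f) := by
  simp [fourierTransform, fourierChar]

lemma isFourierCoeffs_fourierTransform {c : AddMonoidAlgebra ℝ (RatFunc F2)}
    (hc : ∀ l ∈ c.coeff.support, l ∈ RatFunc.strictlyProper F2) :
    IsFourierCoeffs (fourierTransform c) c.coeff := by
  refine ⟨c.coeff.hasFiniteSupport, fun l hl => hc l (Finsupp.mem_support_iff.2 hl), fun f => ?_⟩
  simp only [fourierTransform_apply, eKr_ratToK_mul_polyToK]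
  exact (finsum_eq_sum_of_support_subset _ fun l hl =>
    Finsupp.mem_support_iff.2 (left_ne_zero_of_mul (Function.mem_support.1 hl))).symm

structure IsNonnegFourier (c : AddMonoidAlgebra ℝ (RatFunc F2)) : Prop where
  coeff_nonneg : ∀ l, 0 ≤ c.coeff l
  support_subset : ∀ l ∈ c.coeff.support, l ∈ RatFunc.strictlyProper F2
  one_le_coeff_zero : 1 ≤ c.coeff 0

namespace IsNonnegFourier

lemma one : IsNonnegFourier 1 where
  coeff_nonneg l := by
    classical
    rw [AddMonoidAlgebra.one_def, AddMonoidAlgebra.coeff_single, Finsupp.single_apply]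
    exact ite_nonneg zero_le_one le_rfl
  support_subset l hl := by
    rw [AddMonoidAlgebra.one_def, AddMonoidAlgebra.coeff_single] at hl
    rw [Finset.mem_singleton.1 (Finsupp.support_single_subset hl)]
    exact zero_mem _
  one_le_coeff_zero := by simp

lemma mul {c d : AddMonoidAlgebra ℝ (RatFunc F2)} (hc : IsNonnegFourier c)
    (hd : IsNonnegFourier d) : IsNonnegFourier (c * d) where
  coeff_nonneg := AddMonoidAlgebra.coeff_mul_nonneg hc.coeff_nonneg hd.coeff_nonneg
  support_subset l hl := by
    classical
    obtain ⟨a, ha, b, hb, rfl⟩ :=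
      Finset.mem_add.1 (AddMonoidAlgebra.support_coeff_mul_subset c d hl)
    exact add_mem (hc.support_subset a ha) (hd.support_subset b hb)
  one_le_coeff_zero := by
    have := AddMonoidAlgebra.coeff_zero_mul_coeff_zero_le hc.coeff_nonneg hd.coeff_nonneg
    nlinarith [hc.one_le_coeff_zero, hd.one_le_coeff_zero]

lemma prod {ι : Type*} {s : Finset ι} {c : ι → AddMonoidAlgebra ℝ (RatFunc F2)}
    (hc : ∀ i ∈ s, IsNonnegFourier (c i)) : IsNonnegFourier (∏ i ∈ s, c i) :=
  Finset.prod_induction c IsNonnegFourier (fun _ _ => mul) one hc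

end IsNonnegFourier

lemma two_le_two_pow_natDegree {r : F2[X]} (hr : 0 < r.natDegree) : (2 : ℝ) ≤ 2 ^ r.natDegree :=
  le_self_pow₀ one_le_two hr.ne'

/-- With `q = 2^{deg r}`: `Λ_r(f+1) τ²_r(f) = q² / ((q-1)(q+3)) · (1 + 3·1_{r∣f} - 1_{r∣f+1})`,
and `1_{r∣g} = q⁻¹ Σ_{t ∈ G_{deg r}} e(tg/r)`. -/
def localCoeffs (r : F2[X]) : AddMonoidAlgebra ℝ (RatFunc F2) :=
  ((2 : ℝ) ^ r.natDegree / ((2 ^ r.natDegree - 1) * (2 ^ r.natDegree + 3))) •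
    (AddMonoidAlgebra.single 0 (2 ^ r.natDegree) + ∑ t ∈ GN r.natDegree,
      AddMonoidAlgebra.single ((t : RatFunc F2) / r) (3 - ratChar ((t : RatFunc F2) / r)))

lemma fourierTransform_localCoeffs {r : F2[X]} (hr : 0 < r.natDegree) (f : F2[X]) :
    fourierTransform (localCoeffs r) f = Lambda_r r (f + 1) * tauSq_r r f := by
  have hr0 : r ≠ 0 := ne_zero_of_natDegree_gt hr
  have hcoprime : ¬ (r ∣ f ∧ r ∣ f + 1) := fun ⟨h, h'⟩ =>
    not_isUnit_of_natDegree_pos r hr (isUnit_of_dvd_one ((dvd_add_right h).1 h'))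
  have hsum : ∀ t : F2[X], (3 - ratChar ((t : RatFunc F2) / r)) * ratChar (t / r * f)
      = 3 * ratChar (t / r * f) - ratChar (t / r * ↑(f + 1)) := fun t => by
    rw [RatFunc.coePolynomial_eq_algebraMap (f + 1), map_add, map_one, mul_add, mul_one,
      ratChar_add, ← RatFunc.coePolynomial_eq_algebraMap]
    ring
  simp only [localCoeffs, map_smul, map_add, map_sum, Pi.smul_apply, Pi.add_apply,
    Finset.sum_apply, fourierTransform_single, zero_mul, ratChar_zero, hsum, Finset.sum_sub_distrib,
    ← Finset.mul_sum, sum_GN_ratChar_div_mul hr0, smul_eq_mul]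
  have hq := two_le_two_pow_natDegree hr
  have hq1 : (2 : ℝ) ^ r.natDegree - 1 ≠ 0 := by linarith
  have hq3 : (2 : ℝ) ^ r.natDegree + 3 ≠ 0 := by linarith
  rw [Lambda_r, tauSq_r]
  by_cases h : r ∣ f
  · have h' : ¬ r ∣ f + 1 := fun h' => hcoprime ⟨h, h'⟩
    simp only [if_pos h, if_neg h']
    field_simp
    ring
  by_cases h' : r ∣ f + 1
  · simp only [if_neg h, if_pos h']
    ring
  · simp only [if_neg h, if_neg h']
    field_simp
    ring

lemma isNonnegFourier_localCoeffs {r : F2[X]} (hr : 0 < r.natDegree) :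
    IsNonnegFourier (localCoeffs r) := by
  have hq := two_le_two_pow_natDegree hr
  set q : ℝ := 2 ^ r.natDegree
  have hcoeff : (localCoeffs r).coeff = (q / ((q - 1) * (q + 3))) • (Finsupp.single 0 q +
      ∑ t ∈ GN r.natDegree, Finsupp.single ((t : RatFunc F2) / r) (3 - ratChar (t / r))) := by
    simp [localCoeffs, q, AddMonoidAlgebra.coeff_sum]
  have hscalar : 0 ≤ q / ((q - 1) * (q + 3)) := div_nonneg (by linarith) (by nlinarith)
  have hterm : ∀ (t : F2[X]) l, 0 ≤ Finsupp.single ((t : RatFunc F2) / r) (3 - ratChar (t / r)) l :=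
    fun t l => by
      rw [Finsupp.single_apply]
      exact ite_nonneg (by linarith [ratChar_le_one (t / r)]) le_rfl
  refine ⟨fun l => ?_, fun l hl => ?_, ?_⟩
  · rw [hcoeff, Finsupp.smul_apply, Finsupp.add_apply, Finsupp.finsetSum_apply, smul_eq_mul]
    refine mul_nonneg hscalar (add_nonneg ?_ (Finset.sum_nonneg fun t _ => hterm t l))
    rw [Finsupp.single_apply]
    exact ite_nonneg (by linarith) le_rfl
  · have hmem :
        (localCoeffs r).coeff ∈ Finsupp.supported ℝ ℝ (RatFunc.strictlyProper F2 : Set _) := by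
      rw [hcoeff]
      refine Submodule.smul_mem _ _ (add_mem (Finsupp.single_mem_supported ℝ _ (zero_mem _))
        (Submodule.sum_mem _ fun t ht => Finsupp.single_mem_supported ℝ _ ?_))
      have := mem_degreeLT.1 (mem_GN.1 ht)
      rw [← degree_eq_natDegree (ne_zero_of_natDegree_gt hr)] at this
      exact RatFunc.div_mem_strictlyProper this
    exact (Finsupp.mem_supported ℝ _).1 hmem hl
  · have h0 : 2 ≤ ∑ t ∈ GN r.natDegree,
        Finsupp.single ((t : RatFunc F2) / r) (3 - ratChar (t / r)) 0 := by
      refine le_trans ?_ (Finset.single_le_sum (fun t _ => hterm t 0) (mem_GN.2 (zero_mem _)))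
      norm_num [ratChar_zero]
    rw [hcoeff, Finsupp.smul_apply, Finsupp.add_apply, Finsupp.finsetSum_apply,
      Finsupp.single_eq_same, smul_eq_mul]
    calc (1 : ℝ) ≤ q / ((q - 1) * (q + 3)) * (q + 2) := by
          rw [div_mul_eq_mul_div, one_le_div (by nlinarith)]
          nlinarith
      _ ≤ _ := by gcongr

lemma fourierTransform_prod_localCoeffs (M : ℕ) :
    fourierTransform (∏ r ∈ (GN M).filter (fun r => Irreducible r), localCoeffs r)
      = fun f => LambdaTilde M (f + 1) * HTilde M f := by
  funext f
  rw [map_prod, Finset.prod_apply, LambdaTilde, HTilde, ← Finset.prod_mul_distrib]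
  exact Finset.prod_congr rfl fun r hr =>
    fourierTransform_localCoeffs (Finset.mem_filter.1 hr).2.natDegree_pos f

/-- With `R = N/4`: the Fourier coefficients `β(λ)` of `f ↦ ˜Λ_R(f+1)˜H_R(f)` are
(real and) non-negative, and `β(0) ≫ 1` uniformly in `N`. -/
theorem statement_16 :
    ∃ c : ℝ, 0 < c ∧ ∀ N : ℕ, ∀ β : RatFunc F2 → ℝ,
      IsFourierCoeffs (fun f => LambdaTilde (N / 4) (f + 1) * HTilde (N / 4) f) β →
      (∀ l : RatFunc F2, 0 ≤ β l) ∧ c ≤ β 0 := by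
  refine ⟨1, one_pos, fun N β hβ => ?_⟩
  set c := ∏ r ∈ (GN (N / 4)).filter (fun r => Irreducible r), localCoeffs r
  have hc : IsNonnegFourier c := IsNonnegFourier.prod fun r hr =>
    isNonnegFourier_localCoeffs (Finset.mem_filter.1 hr).2.natDegree_pos
  have hβc : β = c.coeff := by
    refine hβ.unique ?_
    rw [← fourierTransform_prod_localCoeffs]
    exact isFourierCoeffs_fourierTransform hc.support_subset
  rw [hβc]
  exact ⟨hc.coeff_nonneg, hc.one_le_coeff_zero⟩
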